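/- Let A ∈ ℝ^{m×n} be a nonzero matrix, let k ≥ 1, and let X₁, …, X_k be i.i.d. standard Gaussian vectors in ℝⁿ. Then for every θ > 0, the Vanilla estimator T^v_k(θ,X) = θ · max_{1≤i≤k} ‖AXᵢ‖ satisfies P(T^v_k(θ,X) ≤ ‖A‖) ≤ (√(2/π) · θ⁻¹)^k. -/

import Mathlib

open MeasureTheory ProbabilityTheory Real Matrix

/-- Spectral norm (ℓ²→ℓ² operator norm) of a real matrix. -/
noncomputable def matrixSpectralNorm {m n : ℕ} (A : Matrix (Fin m) (Fin n) ℝ) : ℝ :=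
  ‖LinearMap.toContinuousLinearMap (Matrix.toEuclideanLin A)‖

/-- Frobenius norm of a real matrix. -/
noncomputable def frobeniusNorm {m n : ℕ} (A : Matrix (Fin m) (Fin n) ℝ) : ℝ :=
  Real.sqrt (∑ i, ∑ j, (A i j) ^ 2)

/-- Effective rank `ρ = ‖A‖_F² / ‖A‖²`. -/
noncomputable def effectiveRank {m n : ℕ} (A : Matrix (Fin m) (Fin n) ℝ) : ℝ :=
  frobeniusNorm A ^ 2 / matrixSpectralNorm A ^ 2

/-- The standard Gaussian measure on `EuclideanSpace ℝ (Fin n)`: the law of a random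
vector with i.i.d. `N(0,1)` coordinates. -/
noncomputable def stdGaussian (n : ℕ) : Measure (EuclideanSpace ℝ (Fin n)) :=
  (Measure.pi fun _ : Fin n => gaussianReal 0 1).map
    (MeasurableEquiv.toLp 2 (Fin n → ℝ))

/-- CDF of the chi-squared distribution with one degree of freedom:
`χ₁²(t) = P(ξ² ≤ t)` for `ξ ~ N(0,1)`. -/
noncomputable def chiSq1CDF (t : ℝ) : ℝ :=
  ((gaussianReal 0 1) {x : ℝ | x ^ 2 ≤ t}).toReal

/-- Density of the chi-squared distribution with one degree of freedom:
`p₁(u) = e^{-u/2} / √(2 π u)`. -/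
noncomputable def chiSq1PDF (u : ℝ) : ℝ :=
  Real.exp (-u / 2) / Real.sqrt (2 * Real.pi * u)

/-- Density `p_{(1,α)}` of `ξ² + α η²` for `ξ, η` i.i.d. `N(0,1)`:
`p_{(1,α)}(t) = ∫₀^t p₁(s) (1/α) p₁((t-s)/α) ds`. -/
noncomputable def weightedChiSqPDF (α : ℝ) (t : ℝ) : ℝ :=
  ∫ s in (0:ℝ)..t, chiSq1PDF s * ((1 / α) * chiSq1PDF ((t - s) / α))

/-- The Counterbalance estimator
`T^cb(θ, (x₁, x₂)) = θ √((‖AᵀAx₁‖/‖Ax₁‖)² + ‖Ax₂‖²)`. -/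
noncomputable def counterbalance {m n : ℕ} (A : Matrix (Fin m) (Fin n) ℝ) (θ : ℝ)
    (x₁ x₂ : EuclideanSpace ℝ (Fin n)) : ℝ :=
  θ * Real.sqrt ((‖Matrix.toEuclideanLin Aᵀ (Matrix.toEuclideanLin A x₁)‖ /
      ‖Matrix.toEuclideanLin A x₁‖) ^ 2 + ‖Matrix.toEuclideanLin A x₂‖ ^ 2)

/-! By independence, the probability is the `k`-th power of `P(‖A X‖ ≤ ‖A‖ θ⁻¹)` for a single
standard Gaussian vector `X`. Let `v` be a unit vector with `‖A v‖ = ‖A‖` and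
`L x = ⟪A v, A x⟫ / ‖A‖²`. Cauchy–Schwarz gives `‖A‖ |L x| ≤ ‖A x‖`, so that event lies in
`{|L X| ≤ θ⁻¹}`. Now `L X` is a centred Gaussian of standard deviation `‖L‖ ≥ L v = 1`, hence
its density is at most `1 / √(2π)` and `P(|L X| ≤ θ⁻¹) ≤ 2θ⁻¹ / √(2π) = √(2/π) θ⁻¹`. -/

open scoped ENNReal NNReal

namespace ContinuousLinearMap

variable {E F : Type*} [NormedAddCommGroup F]

theorem exists_mem_sphere_norm_apply_eq_opNorm [NormedAddCommGroup E] [NormedSpace ℝ E]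
    [ProperSpace E] [Nontrivial E] [NormedSpace ℝ F] (f : E →L[ℝ] F) :
    ∃ v ∈ Metric.sphere (0 : E) 1, ‖f v‖ = ‖f‖ := by
  simpa [f.sSup_sphere_eq_norm] using ((isCompact_sphere (0 : E) 1).image
    f.continuous.norm).sSup_mem ((NormedSpace.sphere_nonempty.mpr zero_le_one).image _)

theorem exists_one_le_norm_strongDual_mul_abs_le [NormedAddCommGroup E] [InnerProductSpace ℝ E]
    [FiniteDimensional ℝ E] [InnerProductSpace ℝ F] (T : E →L[ℝ] F) (hT : T ≠ 0) :
    ∃ L : StrongDual ℝ E, 1 ≤ ‖L‖ ∧ ∀ x, ‖T‖ * |L x| ≤ ‖T x‖ := by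
  have : Nontrivial E := (subsingleton_or_nontrivial E).resolve_left
    fun _ => hT (Subsingleton.elim T 0)
  obtain ⟨v, hv, hTv⟩ := T.exists_mem_sphere_norm_apply_eq_opNorm
  have hT0 : 0 < ‖T‖ := norm_pos_iff.mpr hT
  set L : StrongDual ℝ E := (‖T‖ ^ 2)⁻¹ • (innerSL ℝ (T v)).comp T
  have hL_apply : ∀ x, L x = (‖T‖ ^ 2)⁻¹ * inner ℝ (T v) (T x) := fun x => rfl
  refine ⟨L, ?_, fun x => ?_⟩
  · have hLv : L v = 1 := by
      rw [hL_apply, real_inner_self_eq_norm_sq, hTv, inv_mul_cancel₀ (by positivity)]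
    simpa [hLv, mem_sphere_zero_iff_norm.mp hv] using L.le_opNorm v
  · calc ‖T‖ * |L x| ≤ ‖T‖ * ((‖T‖ ^ 2)⁻¹ * (‖T v‖ * ‖T x‖)) := by
          rw [hL_apply, abs_mul, abs_of_pos (by positivity)]
          gcongr
          exact abs_real_inner_le_norm _ _
      _ = ‖T x‖ := by rw [hTv]; field_simp

end ContinuousLinearMap

namespace ProbabilityTheory

theorem gaussianPDFReal_le_inv_sqrt (μ : ℝ) (v : ℝ≥0) (x : ℝ) :
    gaussianPDFReal μ v x ≤ (√(2 * π * v))⁻¹ := by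
  rw [gaussianPDFReal]
  refine mul_le_of_le_one_right (by positivity) (exp_le_one_iff.mpr ?_)
  exact div_nonpos_of_nonpos_of_nonneg (neg_nonpos.mpr (sq_nonneg _)) (by positivity)

theorem gaussianReal_Icc_le {v : ℝ≥0} (hv : v ≠ 0) (μ a b : ℝ) :
    gaussianReal μ v (Set.Icc a b) ≤ ENNReal.ofReal ((b - a) / √(2 * π * v)) := by
  rw [gaussianReal_of_var_ne_zero μ hv, withDensity_apply _ measurableSet_Icc]
  calc ∫⁻ x in Set.Icc a b, gaussianPDF μ v x
      ≤ ∫⁻ _ in Set.Icc a b, ENNReal.ofReal (√(2 * π * v))⁻¹ :=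
        lintegral_mono fun x => ENNReal.ofReal_le_ofReal (gaussianPDFReal_le_inv_sqrt μ v x)
    _ = ENNReal.ofReal ((b - a) / √(2 * π * v)) := by
        rw [setLIntegral_const, Real.volume_Icc, ← ENNReal.ofReal_mul (by positivity),
          div_eq_inv_mul]

section StdGaussian

variable {E : Type*} [NormedAddCommGroup E] [InnerProductSpace ℝ E] [FiniteDimensional ℝ E]
  [MeasurableSpace E] [BorelSpace E]

theorem stdGaussian_map_strongDual (L : StrongDual ℝ E) :
    (stdGaussian E).map L = gaussianReal 0 (‖L‖ ^ 2).toNNReal := by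
  rw [IsGaussian.map_eq_gaussianReal, integral_strongDual_stdGaussian,
    variance_dual_stdGaussian]

theorem stdGaussian_abs_strongDual_le (L : StrongDual ℝ E) (hL : L ≠ 0) (c : ℝ) :
    stdGaussian E {x | |L x| ≤ c} ≤ ENNReal.ofReal (√(2 / π) * c / ‖L‖) := by
  have hL0 : 0 < ‖L‖ := norm_pos_iff.mpr hL
  have hset : {x | |L x| ≤ c} = L ⁻¹' Set.Icc (-c) c := by ext; simp [abs_le]
  have hvar : ((‖L‖ ^ 2).toNNReal : ℝ) = ‖L‖ ^ 2 := Real.coe_toNNReal _ (by positivity)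
  have hsqrt : √(2 * π * ‖L‖ ^ 2) = √2 * √π * ‖L‖ := by
    rw [sqrt_mul (by positivity), sqrt_mul zero_le_two, sqrt_sq hL0.le]
  rw [hset, ← Measure.map_apply L.continuous.measurable measurableSet_Icc,
    stdGaussian_map_strongDual]
  refine (gaussianReal_Icc_le (by simpa using hL0.ne') _ _ _).trans_eq ?_
  rw [hvar, hsqrt, sqrt_div zero_le_two]
  congr 1
  field_simp
  rw [sq_sqrt zero_le_two]
  ring

theorem stdGaussian_norm_apply_le_opNorm_mul_le {F : Type*} [NormedAddCommGroup F]
    [InnerProductSpace ℝ F] (T : E →L[ℝ] F) (hT : T ≠ 0) {c : ℝ} (hc : 0 ≤ c) :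
    stdGaussian E {x | ‖T x‖ ≤ ‖T‖ * c} ≤ ENNReal.ofReal (√(2 / π) * c) := by
  obtain ⟨L, hL_norm, hL⟩ := T.exists_one_le_norm_strongDual_mul_abs_le hT
  calc stdGaussian E {x | ‖T x‖ ≤ ‖T‖ * c}
      ≤ stdGaussian E {x | |L x| ≤ c} := measure_mono fun x hx =>
        le_of_mul_le_mul_left ((hL x).trans hx) (norm_pos_iff.mpr hT)
    _ ≤ ENNReal.ofReal (√(2 / π) * c / ‖L‖) :=
        stdGaussian_abs_strongDual_le L (norm_pos_iff.mp (one_pos.trans_le hL_norm)) c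
    _ ≤ ENNReal.ofReal (√(2 / π) * c) :=
        ENNReal.ofReal_le_ofReal (div_le_self (by positivity) hL_norm)

end StdGaussian

theorem iIndepFun.measure_iInter_preimage_eq_pow {Ω β ι : Type*} [Fintype ι]
    [MeasurableSpace Ω] [MeasurableSpace β] {μ : Measure Ω} {ν : Measure β} [NeZero ν]
    {X : ι → Ω → β} (hindep : iIndepFun X μ) (hX : ∀ i, μ.map (X i) = ν)
    {s : Set β} (hs : MeasurableSet s) :
    μ (⋂ i, X i ⁻¹' s) = ν s ^ Fintype.card ι := by
  have hmeas : ∀ i, AEMeasurable (X i) μ := fun i =>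
    aemeasurable_of_map_neZero (by rw [hX i]; infer_instance)
  simpa [← Measure.map_apply_of_aemeasurable (hmeas _) hs, hX] using
    hindep.measure_inter_preimage_eq_mul Finset.univ (sets := fun _ => s) fun _ _ => hs

end ProbabilityTheory

theorem stdGaussian_eq_stdGaussian_euclideanSpace (n : ℕ) :
    stdGaussian n = ProbabilityTheory.stdGaussian (EuclideanSpace ℝ (Fin n)) :=
  map_pi_eq_stdGaussian

theorem vanilla_max_underestimation_general
    {m n : ℕ} (A : Matrix (Fin m) (Fin n) ℝ) (hA : A ≠ 0)
    (k : ℕ) (hk : 1 ≤ k)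
    {Ω : Type*} [MeasureSpace Ω]
    (X : Fin k → Ω → EuclideanSpace ℝ (Fin n))
    (hindep : iIndepFun X ℙ)
    (hX : ∀ i, Measure.map (X i) ℙ = stdGaussian n)
    (θ : ℝ) (hθ : 0 < θ) :
    ℙ {ω | θ * (Finset.univ.sup'
          (Finset.univ_nonempty_iff.mpr (Fin.pos_iff_nonempty.mp hk))
          fun i => ‖Matrix.toEuclideanLin A (X i ω)‖) ≤ matrixSpectralNorm A} ≤
      ENNReal.ofReal ((Real.sqrt (2 / Real.pi) * θ⁻¹) ^ k) := by
  set T := LinearMap.toContinuousLinearMap (Matrix.toEuclideanLin A)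
  have hT : T ≠ 0 := by simpa [T] using hA
  set C := {x | ‖T x‖ ≤ ‖T‖ * θ⁻¹}
  have hC : MeasurableSet C := measurableSet_le (by fun_prop) measurable_const
  have hevent : {ω | θ * (Finset.univ.sup'
        (Finset.univ_nonempty_iff.mpr (Fin.pos_iff_nonempty.mp hk))
        fun i => ‖Matrix.toEuclideanLin A (X i ω)‖) ≤ matrixSpectralNorm A} = ⋂ i, X i ⁻¹' C := by
    ext ω
    simp [C, T, ← le_div_iff₀' hθ, div_eq_mul_inv, matrixSpectralNorm]
  rw [hevent, hindep.measure_iInter_preimage_eq_pow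
    (by simpa [stdGaussian_eq_stdGaussian_euclideanSpace] using hX) hC, Fintype.card_fin,
    ENNReal.ofReal_pow (by positivity)]
  gcongr
  exact stdGaussian_norm_apply_le_opNorm_mul_le T hT (by positivity)

/-- for nonzero `A`, i.i.d. standard Gaussian vectors `X₁, …, X_k`
(`k ≥ 1`) and `θ > 0`, the Vanilla estimator `T^v_k(θ,X) = θ maxᵢ ‖AXᵢ‖` satisfies
`P(T^v_k(θ,X) ≤ ‖A‖) ≤ (√(2/π) θ⁻¹)^k`. -/
theorem vanilla_max_underestimation
    {m n : ℕ} (A : Matrix (Fin m) (Fin n) ℝ) (hA : A ≠ 0)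
    (k : ℕ) (hk : 1 ≤ k)
    {Ω : Type*} [MeasureSpace Ω] [IsProbabilityMeasure (ℙ : Measure Ω)]
    (X : Fin k → Ω → EuclideanSpace ℝ (Fin n))
    (hindep : iIndepFun X ℙ)
    (hX : ∀ i, Measure.map (X i) ℙ = stdGaussian n)
    (θ : ℝ) (hθ : 0 < θ) :
    ℙ {ω | θ * (Finset.univ.sup'
          (Finset.univ_nonempty_iff.mpr (Fin.pos_iff_nonempty.mp hk))
          fun i => ‖Matrix.toEuclideanLin A (X i ω)‖) ≤ matrixSpectralNorm A} ≤
      ENNReal.ofReal ((Real.sqrt (2 / Real.pi) * θ⁻¹) ^ k) :=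
  vanilla_max_underestimation_general A hA k hk X hindep hX θ hθ
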